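/- arXiv:1402.1587 — 5 statements merged into one kernel-verified Lean document; each statement's English description precedes it below -/
import Mathlib

section
/- Let A and B be two independent sets of a graph G with |A| = |B| = ℓ. Then for any natural number k, there exists an (ℓ−1)-TAR-sequence from A to B of length at most 2k if and only if there exists a TJ-sequence from A to B of length at most k. -/
/-!
A token jump `I → insert v (I.erase u)` is the removal of `u` followed by the addition of `v`,
so a TJ-sequence of length `n` yields an `(ℓ-1)`-TAR-sequence of length `2n`.

Conversely, walk along an `(ℓ-1)`-TAR-sequence `I₀, …, I_m` carrying an independent set `T` of
size `ℓ` with `|T \ Iᵢ| ≤ 1`. `T` stays put unless a removal from `Iᵢ` would raise `|T \ Iᵢ₊₁|`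
to `2`; then `|T ∩ Iᵢ₊₁| = ℓ - 2 < |Iᵢ₊₁|`, and `T` moves its token outside `Iᵢ` onto a token of
`Iᵢ₊₁`, staying inside the independent set `Iᵢ`. Every jump is paid for by a removal, which yields
the invariant `2n + ℓ ≤ m + |I₀| + 2 |T \ I₀|` for the number `n` of jumps.
-/
open Finset

variable {V : Type*}

/-- `I` is an independent set of `G`. -/
def IsIndep (G : SimpleGraph V) (I : Finset V) : Prop :=
  ∀ u ∈ I, ∀ v ∈ I, ¬ G.Adj u v

/-- One token addition or removal between independent sets of size at least `k`. -/
def TarStep [DecidableEq V] (G : SimpleGraph V) (k : ℕ) (I J : Finset V) : Prop :=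
  IsIndep G I ∧ IsIndep G J ∧ k ≤ I.card ∧ k ≤ J.card ∧
    ∃ v : V, J = insert v I ∨ I = insert v J

/-- TAR-reachability with token lower bound `k`. -/
def TarReach [DecidableEq V] (G : SimpleGraph V) (k : ℕ) (I J : Finset V) : Prop :=
  Relation.ReflTransGen (TarStep G k) I J

/-- TAR-reachability inside the subgraph of `G` induced by `S`. -/
def TarReachOn [DecidableEq V] (G : SimpleGraph V) (S : Finset V) (k : ℕ)
    (I J : Finset V) : Prop :=
  Relation.ReflTransGen (fun I J => I ⊆ S ∧ J ⊆ S ∧ TarStep G k I J) I J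

/-- A `k`-TAR-sequence of length `n`: independent sets of size at least `k`,
consecutive sets differing by at most one token addition or removal. -/
def IsTarSeq [DecidableEq V] (G : SimpleGraph V) (k n : ℕ) (f : ℕ → Finset V) : Prop :=
  (∀ i ≤ n, IsIndep G (f i) ∧ k ≤ (f i).card) ∧
  (∀ i < n, ∃ v : V, f (i + 1) = insert v (f i) ∨ f i = insert v (f (i + 1)))

/-- A TJ-sequence of length `n`: independent sets of constant size,
consecutive sets differing by one token jump. -/
def IsTJSeq [DecidableEq V] (G : SimpleGraph V) (n : ℕ) (f : ℕ → Finset V) : Prop :=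
  (∀ i ≤ n, IsIndep G (f i)) ∧ (∀ i ≤ n, (f i).card = (f 0).card) ∧
  (∀ i < n, ∃ u v : V, u ∈ f i ∧ f (i + 1) = insert v ((f i).erase u))

lemma IsIndep.subset {G : SimpleGraph V} {I J : Finset V} (hJ : IsIndep G J) (h : I ⊆ J) :
    IsIndep G I :=
  fun u hu v hv => hJ u (h hu) v (h hv)

section Reconfiguration

variable [DecidableEq V]

def TJStep (G : SimpleGraph V) (I J : Finset V) : Prop :=
  IsIndep G I ∧ IsIndep G J ∧ J.card = I.card ∧ ∃ u ∈ I, ∃ v, J = insert v (I.erase u)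

def TarPath (G : SimpleGraph V) (k n : ℕ) (I J : Finset V) : Prop :=
  ∃ f, IsTarSeq G k n f ∧ f 0 = I ∧ f n = J

def TJPath (G : SimpleGraph V) (n : ℕ) (I J : Finset V) : Prop :=
  ∃ g, IsTJSeq G n g ∧ g 0 = I ∧ g n = J

variable {G : SimpleGraph V} {k n : ℕ} {I J K T : Finset V}

theorem eq_insert_of_card_sdiff_lt (h : ∃ v, J = insert v I ∨ I = insert v J)
    (hlt : (T \ I).card < (T \ J).card) :
    ∃ v ∈ T, v ∉ J ∧ I = insert v J ∧ T \ J = insert v (T \ I) := by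
  obtain ⟨v, rfl | rfl⟩ := h
  · have := card_le_card (sdiff_subset_sdiff (subset_refl T) (subset_insert v I))
    omega
  · rw [sdiff_insert] at hlt ⊢
    have hv : v ∈ T \ J := by
      by_contra hv
      rw [erase_eq_of_notMem hv] at hlt
      omega
    exact ⟨v, (mem_sdiff.1 hv).1, (mem_sdiff.1 hv).2, rfl, (insert_erase hv).symm⟩

theorem card_add_two_mul_card_sdiff_le (h : ∃ v, J = insert v I ∨ I = insert v J) :
    J.card + 2 * (T \ J).card ≤ I.card + 1 + 2 * (T \ I).card := by
  by_cases hlt : (T \ I).card < (T \ J).card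
  · obtain ⟨v, -, hvJ, rfl, hsdiff⟩ := eq_insert_of_card_sdiff_lt h hlt
    have hv : v ∉ T \ insert v J := fun hv => (mem_sdiff.1 hv).2 (mem_insert_self v J)
    rw [hsdiff, card_insert_of_notMem hv, card_insert_of_notMem hvJ]
    omega
  · obtain ⟨v, rfl | rfl⟩ := h
    · have := card_insert_le v I
      omega
    · have := card_le_card (subset_insert v J)
      omega

theorem exists_insert_erase_subset {u : V} (hJI : J ⊆ I) (hu : T \ I = {u})
    (hlt : (T ∩ J).card < J.card) :
    ∃ w ∈ J, w ∉ T ∧ insert w (T.erase u) ⊆ I := by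
  obtain ⟨w, hwJ, hwT⟩ := exists_mem_notMem_of_card_lt_card hlt
  refine ⟨w, hwJ, fun hw => hwT (mem_inter.2 ⟨hw, hwJ⟩), insert_subset (hJI hwJ) ?_⟩
  intro x hx
  by_contra hxI
  have : x ∈ T \ I := mem_sdiff.2 ⟨mem_of_mem_erase hx, hxI⟩
  rw [hu, mem_singleton] at this
  exact ne_of_mem_erase hx this

theorem tarPath_zero_iff : TarPath G k 0 I J ↔ I = J ∧ IsIndep G I ∧ k ≤ I.card := by
  constructor
  · rintro ⟨f, hf, rfl, rfl⟩
    exact ⟨rfl, hf.1 0 le_rfl⟩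
  · rintro ⟨rfl, hI⟩
    exact ⟨fun _ => I, ⟨fun _ _ => hI, fun _ h => absurd h (Nat.not_lt_zero _)⟩, rfl, rfl⟩

theorem tarPath_succ_iff :
    TarPath G k (n + 1) I K ↔ ∃ J, TarStep G k I J ∧ TarPath G k n J K := by
  constructor
  · rintro ⟨f, ⟨hv, hs⟩, rfl, rfl⟩
    refine ⟨f 1, ⟨(hv 0 (by omega)).1, (hv 1 (by omega)).1, (hv 0 (by omega)).2,
      (hv 1 (by omega)).2, hs 0 (by omega)⟩, fun i => f (i + 1),
      ⟨fun i hi => hv _ (by omega), fun i hi => hs _ (by omega)⟩, rfl, rfl⟩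
  · rintro ⟨J, ⟨hI, -, hkI, -, hIJ⟩, f, ⟨hv, hs⟩, rfl, rfl⟩
    refine ⟨Stream'.cons I f, ⟨?_, ?_⟩, rfl, rfl⟩
    · rintro (_ | i) hi
      exacts [⟨hI, hkI⟩, hv i (by omega)]
    · rintro (_ | i) hi
      exacts [hIJ, hs i (by omega)]

theorem tjPath_zero_iff : TJPath G 0 I J ↔ I = J ∧ IsIndep G I := by
  constructor
  · rintro ⟨g, hg, rfl, rfl⟩
    exact ⟨rfl, hg.1 0 le_rfl⟩
  · rintro ⟨rfl, hI⟩
    exact ⟨fun _ => I, ⟨fun _ _ => hI, fun _ _ => rfl, fun _ h => absurd h (Nat.not_lt_zero _)⟩,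
      rfl, rfl⟩

theorem tjPath_succ_iff : TJPath G (n + 1) I K ↔ ∃ J, TJStep G I J ∧ TJPath G n J K := by
  constructor
  · rintro ⟨g, ⟨hv, hc, hs⟩, rfl, rfl⟩
    obtain ⟨u, v, hu, h⟩ := hs 0 (by omega)
    refine ⟨g 1, ⟨hv 0 (by omega), hv 1 (by omega), hc 1 (by omega), u, hu, v, h⟩,
      fun i => g (i + 1), ⟨fun i hi => hv _ (by omega), fun i hi => ?_,
      fun i hi => hs _ (by omega)⟩, rfl, rfl⟩
    exact (hc _ (by omega)).trans (hc 1 (by omega)).symm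
  · rintro ⟨J, ⟨hI, -, hcard, u, hu, v, hJ⟩, g, ⟨hv, hc, hs⟩, rfl, rfl⟩
    refine ⟨Stream'.cons I g, ⟨?_, ?_, ?_⟩, rfl, rfl⟩
    · rintro (_ | i) hi
      exacts [hI, hv i (by omega)]
    · rintro (_ | i) hi
      exacts [rfl, (hc i (by omega)).trans hcard]
    · rintro (_ | i) hi
      exacts [⟨u, v, hu, hJ⟩, hs i (by omega)]

theorem TJPath.tarPath (h : TJPath G n I J) : TarPath G (I.card - 1) (2 * n) I J := by
  induction n generalizing I with
  | zero =>
    obtain ⟨rfl, hI⟩ := tjPath_zero_iff.1 h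
    exact tarPath_zero_iff.2 ⟨rfl, hI, Nat.sub_le _ _⟩
  | succ n ih =>
    obtain ⟨_, ⟨hI, hJ, hcard, u, hu, v, rfl⟩, hrest⟩ := tjPath_succ_iff.1 h
    have hcard_erase : (I.erase u).card = I.card - 1 := card_erase_of_mem hu
    have hremove : TarStep G (I.card - 1) I (I.erase u) :=
      ⟨hI, hI.subset (erase_subset u I), Nat.sub_le _ _, hcard_erase.ge, u,
        Or.inr (insert_erase hu).symm⟩
    have hadd : TarStep G (I.card - 1) (I.erase u) (insert v (I.erase u)) :=
      ⟨hI.subset (erase_subset u I), hJ, hcard_erase.ge, hcard ▸ Nat.sub_le _ _, v, Or.inl rfl⟩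
    rw [show 2 * (n + 1) = 2 * n + 1 + 1 by ring]
    exact tarPath_succ_iff.2 ⟨_, hremove, tarPath_succ_iff.2 ⟨_, hadd, hcard ▸ ih hrest⟩⟩

theorem tjStep_insert_erase {u w : V} (hu : u ∈ T) (hw : w ∉ T) (hT : IsIndep G T)
    (hT' : IsIndep G (insert w (T.erase u))) : TJStep G T (insert w (T.erase u)) := by
  refine ⟨hT, hT', ?_, u, hu, w, rfl⟩
  rw [card_insert_of_notMem fun h => hw (mem_of_mem_erase h), card_erase_of_mem hu]
  have := card_pos.2 ⟨u, hu⟩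
  omega

theorem exists_tjStep_of_one_lt_card_sdiff (hstep : TarStep G k I J) (hk : T.card ≤ k + 1)
    (hT : IsIndep G T) (hTI : (T \ I).card ≤ 1) (hTJ : 1 < (T \ J).card) :
    I.card = J.card + 1 ∧ (T \ I).card = 1 ∧ ∃ T', TJStep G T T' ∧ (T' \ J).card ≤ 1 := by
  obtain ⟨v, -, hvJ, rfl, hsdiff⟩ := eq_insert_of_card_sdiff_lt (T := T) hstep.2.2.2.2 (by omega)
  have hv : v ∉ T \ insert v J := fun hv => (mem_sdiff.1 hv).2 (mem_insert_self v J)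
  have hTJ2 : (T \ J).card = (T \ insert v J).card + 1 := by
    rw [hsdiff, card_insert_of_notMem hv]
  obtain ⟨u, hu⟩ := card_eq_one.1 (show (T \ insert v J).card = 1 by omega)
  have huT : u ∈ T \ J :=
    sdiff_subset_sdiff subset_rfl (subset_insert v J) (hu ▸ mem_singleton_self u)
  have hlt : (T ∩ J).card < J.card := by
    have := card_sdiff_add_card_inter T J
    have := hstep.2.2.2.1
    omega
  obtain ⟨w, hwJ, hwT, hsub⟩ := exists_insert_erase_subset (subset_insert v J) hu hlt
  have hsdiff' : insert w (T.erase u) \ J = (T \ J).erase u := by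
    rw [insert_sdiff_of_mem _ hwJ, erase_sdiff_comm]
  refine ⟨card_insert_of_notMem hvJ, by omega, _,
    tjStep_insert_erase (mem_sdiff.1 huT).1 hwT hT (hstep.1.subset hsub), ?_⟩
  rw [hsdiff', card_erase_of_mem huT]
  omega

theorem TarPath.exists_tjPath {ℓ m : ℕ} (h : TarPath G (ℓ - 1) m I J) (hJ : J.card = ℓ)
    (hT : IsIndep G T) (hTc : T.card = ℓ) (hTI : (T \ I).card ≤ 1) :
    ∃ n, 2 * n + ℓ ≤ m + I.card + 2 * (T \ I).card ∧ TJPath G n T J := by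
  induction m generalizing I T with
  | zero =>
    obtain ⟨rfl, hI, -⟩ := tarPath_zero_iff.1 h
    rcases Nat.le_one_iff_eq_zero_or_eq_one.1 hTI with h0 | h1
    · have hTJ : T = I :=
        eq_of_subset_of_card_le (sdiff_eq_empty_iff_subset.1 (card_eq_zero.1 h0)) (by omega)
      exact ⟨0, by omega, tjPath_zero_iff.2 ⟨hTJ, hT⟩⟩
    · obtain ⟨u, hu⟩ := card_eq_one.1 h1
      have huT : u ∈ T := (mem_sdiff.1 (hu ▸ mem_singleton_self u)).1
      have hlt : (T ∩ I).card < I.card := by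
        have := card_sdiff_add_card_inter T I
        omega
      obtain ⟨w, -, hwT, hsub⟩ := exists_insert_erase_subset subset_rfl hu hlt
      have hstep := tjStep_insert_erase huT hwT hT (hI.subset hsub)
      have hTI : insert w (T.erase u) = I :=
        eq_of_subset_of_card_le hsub (by rw [hstep.2.2.1]; omega)
      exact ⟨1, by omega, tjPath_succ_iff.2 ⟨I, hTI ▸ hstep, tjPath_zero_iff.2 ⟨rfl, hI⟩⟩⟩
  | succ m ih =>
    obtain ⟨I', hstep, hrest⟩ := tarPath_succ_iff.1 h
    by_cases hTI' : (T \ I').card ≤ 1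
    · obtain ⟨n, hn, hpath⟩ := ih hrest hT hTc hTI'
      have := card_add_two_mul_card_sdiff_le (T := T) hstep.2.2.2.2
      exact ⟨n, by omega, hpath⟩
    · obtain ⟨hcard, hTI1, T', hjump, hT'I'⟩ :=
        exists_tjStep_of_one_lt_card_sdiff hstep (by omega) hT hTI (by omega)
      obtain ⟨n, hn, hpath⟩ := ih hrest hjump.2.1 (hjump.2.2.1.trans hTc) hT'I'
      exact ⟨n + 1, by omega, tjPath_succ_iff.2 ⟨T', hjump, hpath⟩⟩

end Reconfiguration

theorem tar_iff_tj_general [DecidableEq V] (G : SimpleGraph V) (A B : Finset V) (ℓ : ℕ)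
    (hA : IsIndep G A) (hcA : A.card = ℓ) (hcB : B.card = ℓ)
    (k : ℕ) :
    (∃ m ≤ 2 * k, ∃ f : ℕ → Finset V,
        IsTarSeq G (ℓ - 1) m f ∧ f 0 = A ∧ f m = B) ↔
    (∃ m ≤ k, ∃ f : ℕ → Finset V, IsTJSeq G m f ∧ f 0 = A ∧ f m = B) := by
  constructor
  · rintro ⟨m, hm, htar⟩
    obtain ⟨n, hn, htj⟩ := TarPath.exists_tjPath htar hcB hA hcA (by simp)
    simp only [sdiff_self, bot_eq_empty, card_empty, hcA] at hn
    exact ⟨n, by omega, htj⟩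
  · rintro ⟨n, hn, htj⟩
    exact ⟨2 * n, by omega, hcA ▸ TJPath.tarPath htj⟩

/-- Kamiński, Medvedev and Milanič: for independent sets `A`, `B` of size `ℓ`,
there is an `(ℓ-1)`-TAR-sequence from `A` to `B` of length at most `2k` iff
there is a TJ-sequence from `A` to `B` of length at most `k`. -/
theorem tar_iff_tj [DecidableEq V] (G : SimpleGraph V) (A B : Finset V) (ℓ : ℕ)
    (hA : IsIndep G A) (hB : IsIndep G B) (hcA : A.card = ℓ) (hcB : B.card = ℓ)
    (k : ℕ) :
    (∃ m ≤ 2 * k, ∃ f : ℕ → Finset V,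
        IsTarSeq G (ℓ - 1) m f ∧ f 0 = A ∧ f m = B) ↔
    (∃ m ≤ k, ∃ f : ℕ → Finset V, IsTJSeq G m f ∧ f 0 = A ∧ f m = B) :=
  tar_iff_tj_general G A B ℓ hA hcA hcB k
end

section
/- Let M be a module of a graph G, let k and y be integers, and let A be an independent set of G with |A ∩ M| ≥ max{1, y} and |A| ≥ k. Let H = G[M]. If there exists an independent set B of G with A TAR_k-reachable to B and |B ∩ M| ≤ y, and there exists an independent set C of H with (A ∩ M) TAR_y-reachable (in H) to C, then there exists an independent set D of G with A TAR_k-reachable to D and D ∩ M = C. -/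
open Finset

variable {V : Type*}

/-- `M` is a module of `G`: every vertex outside `M` is adjacent to all of `M`
or to none of `M`. -/
def IsModule (G : SimpleGraph V) (M : Finset V) : Prop :=
  ∀ v ∉ M, (∀ u ∈ M, G.Adj v u) ∨ (∀ u ∈ M, ¬ G.Adj v u)

/-! Along any TAR_k sequence from `A` to `B`, stop at the first set `J` with `|J ∩ M| = y`.
Up to `J` every set meets `M` in at least `y` vertices, so intersecting the sequence with `M`
gives a TAR_y sequence in `G[M]` from `A ∩ M` to `J ∩ M`; reversing it and continuing to `C`
yields a TAR_y sequence in `G[M]` from `J ∩ M` to `C`. Since `J` or its predecessor is an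
independent set meeting `M`, the module property makes `J \ M` anticomplete to `M`, so that
sequence lifts to a TAR_k sequence from `J` to `(J \ M) ∪ C`. -/

theorem Relation.ReflTransGen.exists_first_hit {α : Type*} {r : α → α → Prop} {f : α → ℕ}
    {y : ℕ} {a b : α} (hr : ∀ x x', r x x' → f x ≤ f x' + 1) (hab : ReflTransGen r a b)
    (ha : y ≤ f a) (hb : f b ≤ y) :
    ∃ c, f c = y ∧ ReflTransGen (fun x x' => r x x' ∧ y < f x) a c := by
  suffices ∀ b, ReflTransGen r a b →
      (∃ c, f c = y ∧ ReflTransGen (fun x x' => r x x' ∧ y < f x) a c) ∨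
        (y < f b ∧ ReflTransGen (fun x x' => r x x' ∧ y < f x) a b) by
    rcases this b hab with h | ⟨hlt, -⟩
    · exact h
    · omega
  intro b hab
  induction hab with
  | refl =>
    rcases ha.eq_or_lt with h | h
    · exact .inl ⟨a, h.symm, .refl⟩
    · exact .inr ⟨h, .refl⟩
  | @tail x x' _ hxx' ih =>
    rcases ih with h | ⟨hlt, hax⟩
    · exact .inl h
    have hax' := hax.tail ⟨hxx', hlt⟩
    have := hr x x' hxx'
    by_cases hx' : f x' ≤ y
    · exact .inl ⟨x', by omega, hax'⟩
    · exact .inr ⟨by omega, hax'⟩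

section

variable {G : SimpleGraph V} {I J : Finset V}

theorem IsIndep.mono (hJ : IsIndep G J) (h : I ⊆ J) : IsIndep G I :=
  fun u hu v hv => hJ u (h hu) v (h hv)

end

section

variable [DecidableEq V] {G : SimpleGraph V} {M N I J X X' : Finset V} {k y : ℕ}

theorem IsIndep.union (hI : IsIndep G I) (hJ : IsIndep G J)
    (hIJ : ∀ u ∈ I, ∀ v ∈ J, ¬ G.Adj u v) : IsIndep G (I ∪ J) := by
  intro u hu v hv
  rcases mem_union.mp hu with hu | hu <;> rcases mem_union.mp hv with hv | hv
  · exact hI u hu v hv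
  · exact hIJ u hu v hv
  · exact fun h => hIJ v hv u hu h.symm
  · exact hJ u hu v hv

theorem IsModule.not_adj_of_isIndep (hM : IsModule G M) (hX : IsIndep G X)
    (hXM : (X ∩ M).Nonempty) : ∀ u ∈ X \ M, ∀ m ∈ M, ¬ G.Adj u m := by
  intro u hu m hm
  obtain ⟨w, hw⟩ := hXM
  rw [mem_sdiff] at hu
  rw [mem_inter] at hw
  rcases hM u hu.2 with hall | hnone
  · exact absurd (hall w hw.2) (hX u hu.1 w hw.1)
  · exact hnone m hm

theorem TarReach.isIndep (h : TarReach G k I J) (hI : IsIndep G I) : IsIndep G J := by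
  induction h with
  | refl => exact hI
  | tail _ step _ => exact step.2.1

theorem TarReach.le_card (h : TarReach G k I J) (hI : k ≤ I.card) : k ≤ J.card := by
  induction h with
  | refl => exact hI
  | tail _ step _ => exact step.2.2.2.1

theorem TarReachOn.symm (h : TarReachOn G M y I J) : TarReachOn G M y J I := by
  have : Std.Symm fun I J : Finset V => I ⊆ M ∧ J ⊆ M ∧ TarStep G y I J :=
    ⟨fun _ _ ⟨hI, hJ, hIi, hJi, hIc, hJc, v, hv⟩ => ⟨hJ, hI, hJi, hIi, hJc, hIc, v, hv.symm⟩⟩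
  exact Std.Symm.symm (r := Relation.ReflTransGen _) _ _ h

theorem TarReachOn.subset (h : TarReachOn G M y I J) (hI : I ⊆ M) : J ⊆ M := by
  induction h with
  | refl => exact hI
  | tail _ step _ => exact step.2.1

theorem TarStep.card_inter_le_succ (h : TarStep G k X X') :
    (X ∩ M).card ≤ (X' ∩ M).card + 1 := by
  obtain ⟨-, -, -, -, v, rfl | rfl⟩ := h
  · exact (card_le_card (inter_subset_inter (subset_insert v X) subset_rfl)).trans
      (Nat.le_succ _)
  · calc (insert v X' ∩ M).card ≤ (insert v (X' ∩ M)).card := card_le_card (by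
          rw [insert_inter_distrib]; exact inter_subset_inter subset_rfl (subset_insert v M))
      _ ≤ (X' ∩ M).card + 1 := card_insert_le _ _

theorem TarStep.tarReachOn_inter (h : TarStep G k X X') (hX : y ≤ (X ∩ M).card)
    (hX' : y ≤ (X' ∩ M).card) : TarReachOn G M y (X ∩ M) (X' ∩ M) := by
  obtain ⟨hXi, hX'i, -, -, v, hv⟩ := h
  by_cases hvM : v ∈ M
  · refine .single ⟨inter_subset_right, inter_subset_right, hXi.mono inter_subset_left,
      hX'i.mono inter_subset_left, hX, hX', v, ?_⟩
    rcases hv with rfl | rfl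
    · exact .inl (insert_inter_of_mem hvM)
    · exact .inr (insert_inter_of_mem hvM)
  · rcases hv with rfl | rfl
    · rw [insert_inter_of_notMem hvM]; exact .refl
    · rw [insert_inter_of_notMem hvM]; exact .refl

theorem tarReachOn_inter_of_reflTransGen
    (h : Relation.ReflTransGen (fun X X' => TarStep G k X X' ∧ y < (X ∩ M).card) I J)
    (hJ : y ≤ (J ∩ M).card) : TarReachOn G M y (I ∩ M) (J ∩ M) := by
  induction h with
  | refl => exact .refl
  | tail _ step ih => exact (ih step.2.le).trans (step.1.tarReachOn_inter step.2.le hJ)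

theorem TarStep.not_adj_of_inter_nonempty (hM : IsModule G M) (h : TarStep G k X J)
    (hXM : (X ∩ M).Nonempty) : ∀ u ∈ J \ M, ∀ m ∈ M, ¬ G.Adj u m := by
  obtain ⟨hX, hJ, -, -, v, rfl | rfl⟩ := h
  · exact hM.not_adj_of_isIndep hJ
      (hXM.mono (inter_subset_inter (subset_insert v X) subset_rfl))
  · exact fun u hu => hM.not_adj_of_isIndep hX hXM u
      (sdiff_subset_sdiff (subset_insert v J) subset_rfl hu)

theorem TarReachOn.union_left (hNM : Disjoint N M) (hN : IsIndep G N)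
    (hNadj : ∀ u ∈ N, ∀ m ∈ M, ¬ G.Adj u m) (hk : k ≤ N.card + y)
    (h : TarReachOn G M y I J) : TarReach G k (N ∪ I) (N ∪ J) := by
  have lift : ∀ X, X ⊆ M → IsIndep G X → y ≤ X.card → IsIndep G (N ∪ X) ∧ k ≤ (N ∪ X).card :=
    fun X hXM hX hXy => ⟨hN.union hX fun u hu m hm => hNadj u hu m (hXM hm),
      by rw [card_union_of_disjoint (hNM.mono_right hXM)]; omega⟩
  induction h with
  | refl => exact .refl
  | tail _ step ih =>
    obtain ⟨hXM, hX'M, hX, hX', hXy, hX'y, v, hv⟩ := step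
    refine ih.tail ⟨(lift _ hXM hX hXy).1, (lift _ hX'M hX' hX'y).1, (lift _ hXM hX hXy).2,
      (lift _ hX'M hX' hX'y).2, v, ?_⟩
    rcases hv with rfl | rfl
    · exact .inl (union_insert v N _)
    · exact .inr (union_insert v N _)

end

/-- Module Lemma A. -/
theorem module_lemma_A [DecidableEq V] (G : SimpleGraph V) (M : Finset V)
    (hM : IsModule G M) (k y : ℕ) (A : Finset V) (hA : IsIndep G A)
    (hAM : max 1 y ≤ (A ∩ M).card) (hAk : k ≤ A.card)
    (hB : ∃ B : Finset V, TarReach G k A B ∧ (B ∩ M).card ≤ y)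
    (C : Finset V) (hC : TarReachOn G M y (A ∩ M) C) :
    ∃ D : Finset V, TarReach G k A D ∧ D ∩ M = C := by
  obtain ⟨B, hAB, hBy⟩ := hB
  obtain ⟨J, hJy, hfirst⟩ := Relation.ReflTransGen.exists_first_hit
    (fun _ _ h => TarStep.card_inter_le_succ h) hAB (le_of_max_le_right hAM) hBy
  have hAJ : TarReach G k A J := Relation.ReflTransGen.mono (fun _ _ h => h.1) _ _ hfirst
  have hJC : TarReachOn G M y (J ∩ M) C :=
    (tarReachOn_inter_of_reflTransGen hfirst hJy.ge).symm.trans hC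
  have hJadj : ∀ u ∈ J \ M, ∀ m ∈ M, ¬ G.Adj u m := by
    rcases hfirst.cases_tail with rfl | ⟨X, -, hXJ, hXy⟩
    · exact hM.not_adj_of_isIndep hA (card_pos.mp (le_of_max_le_left hAM))
    · exact hXJ.not_adj_of_inter_nonempty hM (card_pos.mp (by omega))
  have hk : k ≤ (J \ M).card + y := by
    have := card_sdiff_add_card_inter J M
    have := hAJ.le_card hAk
    omega
  have hJD := hJC.union_left disjoint_sdiff_self_left
    ((hAJ.isIndep hA).mono sdiff_subset) hJadj hk
  rw [sdiff_union_inter] at hJD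
  refine ⟨(J \ M) ∪ C, hAJ.trans hJD, ?_⟩
  rw [union_inter_distrib_right, sdiff_inter_self, empty_union,
    inter_eq_left.mpr (hC.subset inter_subset_right)]
end

section
/- Let G_u be the disjoint union of graphs G_v and G_w, let I be an independent set of G_u, and ℓ ≤ |I|. Then there is a unique maximum ℓ-stable tuple: among all ℓ-stable tuples (x', y'), there is one (x, y) with x ≥ x' and y ≥ y' for all ℓ-stable (x', y'). -/
open Finset

variable {V : Type*}

/-- The maximum size of an independent set of `G` that is TAR_k-reachable from `I`. -/
noncomputable def RIS [DecidableEq V] (G : SimpleGraph V) (k : ℕ) (I : Finset V) : ℕ :=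
  sSup {m | ∃ J : Finset V, TarReach G k I J ∧ J.card = m}

/-- The maximum size of an independent set TAR_k-reachable from `I` inside the
subgraph of `G` induced by `S`. -/
noncomputable def RISOn [DecidableEq V] (G : SimpleGraph V) (S : Finset V) (k : ℕ)
    (I : Finset V) : ℕ :=
  sSup {m | ∃ J : Finset V, TarReachOn G S k I J ∧ J.card = m}

/-- `(x, y)` is an `ℓ`-stable tuple for the independent set `I` of the disjoint
union of the subgraphs induced by `S` and `Sᶜ`. -/
def StableTuple [Fintype V] [DecidableEq V] (G : SimpleGraph V) (S : Finset V)
    (I : Finset V) (ℓ x y : ℕ) : Prop :=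
  x ≤ (I ∩ S).card ∧ y ≤ (I ∩ Sᶜ).card ∧
  x = max 0 (ℓ - RISOn G Sᶜ y (I ∩ Sᶜ)) ∧ y = max 0 (ℓ - RISOn G S x (I ∩ S))

/-!
Raising the token bound can only shrink the reachable sets, so `y ↦ ℓ - RIS_y` and
`x ↦ ℓ - RIS_x` are monotone, and `ℓ`-stable tuples are exactly the pairs `(x, g x)` with `x` a
fixed point of the monotone map `f ∘ g`. Its greatest fixed point (Knaster–Tarski) gives the
maximum tuple; the size constraints hold automatically because `RIS` of a set is at least its
size and `ℓ ≤ |I|`.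
-/

/-- Knaster–Tarski: the supremum of the post-fixed points is the greatest fixed point. -/
theorem Monotone.exists_isGreatest_fixedPoints {α : Type*} [ConditionallyCompleteLattice α]
    {f : α → α} (hf : Monotone f) (hbdd : BddAbove (Set.range f)) {a : α} (ha : a ≤ f a) :
    ∃ x, IsGreatest (Function.fixedPoints f) x := by
  set T := {x | x ≤ f x}
  obtain ⟨b, hb⟩ := hbdd
  have hT : BddAbove T := ⟨b, fun x hx => hx.trans (hb ⟨x, rfl⟩)⟩
  have hpost : sSup T ≤ f (sSup T) :=
    csSup_le ⟨a, ha⟩ fun x hx => hx.trans (hf (le_csSup hT hx))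
  refine ⟨sSup T, le_antisymm (le_csSup hT (hf hpost)) hpost, fun x hx => ?_⟩
  exact le_csSup hT (le_of_eq hx.symm)

lemma TarReachOn.mono [DecidableEq V] {G : SimpleGraph V} {S I J : Finset V} {k k' : ℕ}
    (h : k ≤ k') (hIJ : TarReachOn G S k' I J) : TarReachOn G S k I J :=
  Relation.ReflTransGen.mono (fun _ _ ⟨hA, hB, hI, hJ, hkI, hkJ, hstep⟩ =>
    ⟨hA, hB, hI, hJ, h.trans hkI, h.trans hkJ, hstep⟩) _ _ hIJ

section RISOn

variable [Fintype V] [DecidableEq V] (G : SimpleGraph V) (S I : Finset V)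

lemma bddAbove_reachable_cards (k : ℕ) :
    BddAbove {m | ∃ J : Finset V, TarReachOn G S k I J ∧ J.card = m} :=
  ⟨Fintype.card V, fun _ ⟨J, _, hJ⟩ => hJ ▸ J.card_le_univ⟩

lemma card_le_RISOn (k : ℕ) : I.card ≤ RISOn G S k I :=
  le_csSup (bddAbove_reachable_cards G S I k) ⟨I, .refl, rfl⟩

lemma RISOn_antitone : Antitone fun k => RISOn G S k I := fun _ _ h =>
  csSup_le_csSup (bddAbove_reachable_cards G S I _) ⟨I.card, I, .refl, rfl⟩
    fun _ ⟨J, hJ, hcard⟩ => ⟨J, hJ.mono h, hcard⟩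

end RISOn

lemma card_inter_add_card_inter_compl {α : Type*} [Fintype α] [DecidableEq α]
    (s t : Finset α) : (s ∩ t).card + (s ∩ tᶜ).card = s.card := by
  rw [← sdiff_eq_inter_compl, card_inter_add_card_sdiff]

theorem max_stable_exists_general [Fintype V] [DecidableEq V] (G : SimpleGraph V)
    (S : Finset V) (I : Finset V) (ℓ : ℕ) (hℓ : ℓ ≤ I.card) :
    ∃ x y : ℕ, StableTuple G S I ℓ x y ∧
      ∀ x' y' : ℕ, StableTuple G S I ℓ x' y' → x' ≤ x ∧ y' ≤ y := by
  set f : ℕ → ℕ := fun y => ℓ - RISOn G Sᶜ y (I ∩ Sᶜ)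
  set g : ℕ → ℕ := fun x => ℓ - RISOn G S x (I ∩ S)
  have hf : Monotone f := fun _ _ h => Nat.sub_le_sub_left (RISOn_antitone G Sᶜ _ h) ℓ
  have hg : Monotone g := fun _ _ h => Nat.sub_le_sub_left (RISOn_antitone G S _ h) ℓ
  have hcard := card_inter_add_card_inter_compl I S
  have hf_le : ∀ y, f y ≤ (I ∩ S).card := fun y =>
    (Nat.sub_le_sub_left (card_le_RISOn G Sᶜ (I ∩ Sᶜ) y) ℓ).trans (by omega)
  have hg_le : ∀ x, g x ≤ (I ∩ Sᶜ).card := fun x =>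
    (Nat.sub_le_sub_left (card_le_RISOn G S (I ∩ S) x) ℓ).trans (by omega)
  have stable_iff : ∀ x y, StableTuple G S I ℓ x y ↔ f y = x ∧ g x = y := fun x y => by
    simp only [StableTuple, Nat.zero_max]
    constructor
    · rintro ⟨-, -, hx, hy⟩; exact ⟨hx.symm, hy.symm⟩
    · rintro ⟨rfl, hy⟩; exact ⟨hf_le _, hy ▸ hg_le _, rfl, hy.symm⟩
  obtain ⟨x, hx_fixed, hx_greatest⟩ := (hf.comp hg).exists_isGreatest_fixedPoints
    ⟨(I ∩ S).card, by rintro _ ⟨y, rfl⟩; exact hf_le _⟩ (Nat.zero_le (f (g 0)))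
  refine ⟨x, g x, (stable_iff _ _).2 ⟨hx_fixed, rfl⟩, fun x' y' hstable => ?_⟩
  obtain ⟨hx', rfl⟩ := (stable_iff _ _).1 hstable
  have hle : x' ≤ x := hx_greatest hx'
  exact ⟨hle, hg hle⟩

/-- There is a unique maximum `ℓ`-stable tuple: an `ℓ`-stable tuple dominating
all `ℓ`-stable tuples coordinatewise. -/
theorem max_stable_exists [Fintype V] [DecidableEq V] (G : SimpleGraph V)
    (S : Finset V) (hsep : ∀ a ∈ S, ∀ b ∉ S, ¬ G.Adj a b)
    (I : Finset V) (hI : IsIndep G I) (ℓ : ℕ) (hℓ : ℓ ≤ I.card) :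
    ∃ x y : ℕ, StableTuple G S I ℓ x y ∧
      ∀ x' y' : ℕ, StableTuple G S I ℓ x' y' → x' ≤ x ∧ y' ≤ y :=
  max_stable_exists_general G S I ℓ hℓ
end

section
/- Let A and B be two distinct independent sets of an even-hole-free graph G, both of size at least k. Then A is TAR_k-reachable to B if and only if neither A nor B is a dominating set of G of size exactly k. -/
open Finset

variable {V : Type*}

/-- `G` has an induced cycle on `n` vertices. -/
def HasInducedCycle (G : SimpleGraph V) (n : ℕ) : Prop :=
  ∃ f : ZMod n → V, Function.Injective f ∧
    ∀ i j : ZMod n, G.Adj (f i) (f j) ↔ (i = j + 1 ∨ j = i + 1)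

/-- `G` is even-hole-free: it has no induced even cycle. -/
def EvenHoleFree (G : SimpleGraph V) : Prop :=
  ∀ n : ℕ, 4 ≤ n → Even n → ¬ HasInducedCycle G n

/-- `D` is a dominating set of `G`. -/
def IsDominating (G : SimpleGraph V) (D : Finset V) : Prop :=
  ∀ v : V, v ∈ D ∨ ∃ u ∈ D, G.Adj u v

/-!
A dominating independent set of size exactly `k` admits no TAR_k move at all. Conversely, every
other independent set of size at least `k` reaches an independent set of size `k + 1`, by adding an
undominated vertex or by deleting tokens, and any two independent `(k + 1)`-sets are joined by
token jumps, each of which is a deletion followed by an addition.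

For the token jumps, put `X = A \ B` and `Y = B \ A`, so `|X| = |Y|`. A cycle of `G` inside
`X ∪ Y` alternates between `X` and `Y`, so it is even, and a shortest one is chordless, hence an
even hole: `X ∪ Y` contains no cycle. If every `y ∈ Y` had two neighbours in `X`, we could delete
vertices of `X` with at most one neighbour in `Y` together with that neighbour, keeping
`|X| ≤ |Y|`, until every vertex of `X ∪ Y` had two neighbours inside it, which forces a cycle. So
some `y ∈ Y` has at most one neighbour `a` in `X`, and `A - a + y` is independent and closer to `B`.
-/

section Cycles

variable {G : SimpleGraph V}

def HasCycleIn (G : SimpleGraph V) (S : Finset V) (n : ℕ) : Prop :=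
  3 ≤ n ∧ ∃ f : ZMod n → V, Function.Injective f ∧ (∀ i, f i ∈ S) ∧
    ∀ i, G.Adj (f i) (f (i + 1))

lemma HasCycleIn.mono {S T : Finset V} {n : ℕ} (h : HasCycleIn G S n) (hST : S ⊆ T) :
    HasCycleIn G T n :=
  let ⟨hn, f, hinj, hS, hadj⟩ := h
  ⟨hn, f, hinj, fun i => hST (hS i), hadj⟩

lemma hasCycleIn_of_injOn {S : Finset V} {n : ℕ} (hn : 3 ≤ n) {g : ℕ → V}
    (hinj : Set.InjOn g (Set.Iio n)) (hS : ∀ i < n, g i ∈ S)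
    (hadj : ∀ i, i + 1 < n → G.Adj (g i) (g (i + 1))) (hclose : G.Adj (g (n - 1)) (g 0)) :
    HasCycleIn G S n := by
  have : NeZero n := ⟨by omega⟩
  refine ⟨hn, fun i => g i.val,
    fun i j hij => ZMod.val_injective n (hinj (ZMod.val_lt i) (ZMod.val_lt j) hij),
    fun i => hS _ (ZMod.val_lt i), fun i => ?_⟩
  obtain ⟨m, hm, rfl⟩ : ∃ m < n, (m : ZMod n) = i :=
    ⟨i.val, ZMod.val_lt i, ZMod.natCast_zmod_val i⟩
  dsimp only
  rw [← Nat.cast_add_one, ZMod.val_cast_of_lt hm]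
  rcases (show m + 1 < n ∨ m + 1 = n by omega) with hlt | heq
  · rw [ZMod.val_cast_of_lt hlt]
    exact hadj m hlt
  · rw [heq, ZMod.natCast_self, ZMod.val_zero, show m = n - 1 by omega]
    exact hclose

lemma exists_hasCycleIn_of_walk {S : Finset V} {w : ℕ → V} (hS : ∀ k, w k ∈ S)
    (hadj : ∀ k, G.Adj (w k) (w (k + 1))) (hback : ∀ k, w (k + 2) ≠ w k) :
    ∃ n, HasCycleIn G S n := by
  classical
  have hrep : ∃ j, ∃ i < j, w i = w j := by
    obtain ⟨i, j, hij, h⟩ := Set.Finite.exists_lt_map_eq_of_forall_mem hS S.finite_toSet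
    exact ⟨j, i, hij, h⟩
  obtain ⟨i, hij, hwij⟩ := Nat.find_spec hrep
  set j := Nat.find hrep
  have hinj : ∀ a b, a < b → b < j → w a ≠ w b :=
    fun a b hab hbj h => Nat.find_min hrep hbj ⟨a, hab, h⟩
  refine ⟨j - i, hasCycleIn_of_injOn (g := fun t => w (i + t)) ?_ ?_ (fun _ _ => hS _)
    (fun t _ => hadj (i + t)) ?_⟩
  · by_contra! hshort
    rcases (show j = i + 1 ∨ j = i + 2 by omega) with hj | hj
    · exact (hadj i).ne (hwij.trans (congrArg w hj))
    · exact hback i ((congrArg w hj).symm.trans hwij.symm)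
  · intro a ha b hb hab
    simp only [Set.mem_Iio] at ha hb
    by_contra hne
    rcases Nat.lt_or_gt_of_ne hne with hlt | hlt
    · exact hinj _ _ (by omega) (by omega) hab
    · exact hinj _ _ (by omega) (by omega) hab.symm
  · have hlast := hadj (j - 1)
    rw [Nat.sub_add_cancel (by omega), ← hwij] at hlast
    simpa [show i + (j - i - 1) = j - 1 by omega] using hlast

lemma exists_hasCycleIn_of_forall_exists_adj_ne {S : Finset V} (hS : S.Nonempty)
    (hdeg : ∀ v ∈ S, ∀ u, ∃ w ∈ S, G.Adj v w ∧ w ≠ u) : ∃ n, HasCycleIn G S n := by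
  obtain ⟨v₀, hv₀⟩ := hS
  have : Nonempty V := ⟨v₀⟩
  choose! next hnextS hnextAdj hnextNe using hdeg
  -- States are pairs (previous vertex, current vertex).
  let p : ℕ → V × V := fun k => (fun q : V × V => (q.2, next q.2 q.1))^[k] (v₀, v₀)
  have hp : ∀ k, p (k + 1) = ((p k).2, next (p k).2 (p k).1) :=
    fun k => Function.iterate_succ_apply' _ _ _
  have hmem : ∀ k, (p k).2 ∈ S := by
    intro k
    induction k with
    | zero => exact hv₀
    | succ k ih => rw [hp]; exact hnextS _ ih _
  refine exists_hasCycleIn_of_walk (w := fun k => (p k).2) hmem (fun k => ?_) (fun k => ?_)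
  · rw [hp]
    exact hnextAdj _ (hmem k) _
  · simp only [hp]
    exact hnextNe _ (hnextS _ (hmem k) _) _

/-- A chord of a shortest cycle would cut off a shorter one. -/
lemma HasCycleIn.hasInducedCycle {S : Finset V} {n : ℕ} (h : HasCycleIn G S n)
    (hmin : ∀ m < n, ¬ HasCycleIn G S m) : HasInducedCycle G n := by
  obtain ⟨hn, f, hinj, hS, hadj⟩ := h
  have : NeZero n := ⟨by omega⟩
  refine ⟨f, hinj, fun i j => ⟨fun hij => ?_, ?_⟩⟩
  swap
  · rintro (rfl | rfl)
    exacts [(hadj j).symm, hadj i]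
  by_contra! hchord
  obtain ⟨d, hd, rfl⟩ : ∃ d < n, j = i + d :=
    ⟨(j - i).val, ZMod.val_lt _, by rw [ZMod.natCast_zmod_val]; ring⟩
  have hd0 : d ≠ 0 := by
    rintro rfl
    simp at hij
  have hd1 : d ≠ 1 := by
    rintro rfl
    simp at hchord
  have hdn : d ≠ n - 1 := by
    rintro rfl
    apply hchord.1
    rw [Nat.cast_sub (by omega), ZMod.natCast_self]
    ring
  apply hmin (d + 1) (by omega)
  refine hasCycleIn_of_injOn (g := fun t => f (i + t)) (by omega) ?_ (fun _ _ => hS _)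
    (fun t _ => by simpa [add_assoc] using hadj (i + t)) (by simpa using hij.symm)
  intro a ha b hb hab
  simp only [Set.mem_Iio] at ha hb
  have := congrArg ZMod.val (add_left_cancel (hinj hab))
  rwa [ZMod.val_cast_of_lt (by omega), ZMod.val_cast_of_lt (by omega)] at this

variable [DecidableEq V]

lemma exists_hasCycleIn_union_of_card_le {X Y : Finset V} (hY : Y.Nonempty) (hcard : #X ≤ #Y)
    (htwo : ∀ y ∈ Y, ∀ a, ∃ x ∈ X, G.Adj y x ∧ x ≠ a) : ∃ n, HasCycleIn G (X ∪ Y) n := by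
  induction X using Finset.strongInduction generalizing Y with
  | H X ih =>
  by_cases hleaf : ∃ x ∈ X, ∃ b, ∀ y ∈ Y, G.Adj x y → y = b
  · obtain ⟨x, hx, b, hb⟩ := hleaf
    have htwo' : ∀ y ∈ Y.erase b, ∀ a, ∃ x' ∈ X.erase x, G.Adj y x' ∧ x' ≠ a := by
      intro y hy a
      obtain ⟨x', hx', hadj, hne⟩ := htwo y (mem_of_mem_erase hy) a
      refine ⟨x', mem_erase.2 ⟨?_, hx'⟩, hadj, hne⟩
      rintro rfl
      exact ne_of_mem_erase hy (hb y (mem_of_mem_erase hy) hadj.symm)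
    have hY' : (Y.erase b).Nonempty := by
      rw [nonempty_iff_ne_empty, Ne, erase_eq_empty_iff, not_or]
      refine ⟨hY.ne_empty, fun hYb => ?_⟩
      obtain ⟨x₁, hx₁, -, -⟩ := htwo b (by simp [hYb]) b
      obtain ⟨x₂, hx₂, -, hne⟩ := htwo b (by simp [hYb]) x₁
      have := one_lt_card.2 ⟨x₂, hx₂, x₁, hx₁, hne⟩
      rw [hYb, card_singleton] at hcard
      omega
    have hcard' : #(X.erase x) ≤ #(Y.erase b) := by
      have := pred_card_le_card_erase (s := Y) (a := b)
      rw [card_erase_of_mem hx]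
      omega
    obtain ⟨n, hn⟩ := ih _ (erase_ssubset hx) hY' hcard' htwo'
    exact ⟨n, hn.mono (union_subset_union (erase_subset _ _) (erase_subset _ _))⟩
  · push Not at hleaf
    refine exists_hasCycleIn_of_forall_exists_adj_ne (hY.mono subset_union_right) ?_
    intro v hv u
    rcases mem_union.1 hv with hv | hv
    · obtain ⟨y, hy, h⟩ := hleaf v hv u
      exact ⟨y, mem_union_right _ hy, h⟩
    · obtain ⟨x, hx, h⟩ := htwo v hv u
      exact ⟨x, mem_union_left _ hx, h⟩

lemma HasCycleIn.even {X Y : Finset V} {n : ℕ} (hX : IsIndep G X) (hY : IsIndep G Y)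
    (h : HasCycleIn G (X ∪ Y) n) : Even n := by
  obtain ⟨-, f, -, hS, hadj⟩ := h
  have halt : ∀ i, f (i + 1) ∈ X ↔ f i ∉ X := by
    intro i
    refine ⟨fun h₁ h₀ => hX _ h₀ _ h₁ (hadj i), fun h₀ => ?_⟩
    rcases mem_union.1 (hS (i + 1)) with h₁ | h₁
    · exact h₁
    · have h₀ : f i ∈ Y := (mem_union.1 (hS i)).resolve_left h₀
      exact absurd (hadj i) (hY _ h₀ _ h₁)
  have hpar : ∀ m : ℕ, (f m ∈ X ↔ f 0 ∈ X) ↔ Even m := by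
    intro m
    induction m with
    | zero => simp
    | succ m ih =>
      rw [Nat.cast_succ, halt, Nat.even_add_one]
      tauto
  simpa [ZMod.natCast_self] using hpar n

lemma not_hasCycleIn_union (hG : EvenHoleFree G) {X Y : Finset V} (hX : IsIndep G X)
    (hY : IsIndep G Y) (n : ℕ) : ¬ HasCycleIn G (X ∪ Y) n := by
  classical
  intro h
  have hex : ∃ n, HasCycleIn G (X ∪ Y) n := ⟨n, h⟩
  have hshortest := Nat.find_spec hex
  have heven := hshortest.even hX hY
  refine hG _ ?_ heven (hshortest.hasInducedCycle fun m hm => Nat.find_min hex hm)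
  obtain ⟨h3, -⟩ := hshortest
  obtain ⟨t, ht⟩ := heven
  omega

lemma exists_forall_adj_eq_of_card_le (hG : EvenHoleFree G) {X Y : Finset V}
    (hX : IsIndep G X) (hY : IsIndep G Y) (hX₀ : X.Nonempty) (hcard : #X ≤ #Y) :
    ∃ y ∈ Y, ∃ a ∈ X, ∀ x ∈ X, G.Adj y x → x = a := by
  by_contra! h
  obtain ⟨x₀, hx₀⟩ := hX₀
  have hY₀ : Y.Nonempty := card_pos.1 ((card_pos.2 ⟨x₀, hx₀⟩).trans_le hcard)
  have htwo : ∀ y ∈ Y, ∀ a, ∃ x ∈ X, G.Adj y x ∧ x ≠ a := by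
    intro y hy a
    by_cases ha : a ∈ X
    · exact h y hy a ha
    · obtain ⟨x, hx, hadj, -⟩ := h y hy x₀ hx₀
      exact ⟨x, hx, hadj, fun hxa => ha (hxa ▸ hx)⟩
  obtain ⟨n, hn⟩ := exists_hasCycleIn_union_of_card_le hY₀ hcard htwo
  exact not_hasCycleIn_union hG hX hY n hn

end Cycles

section Reconfiguration

variable {G : SimpleGraph V} {k : ℕ}

lemma IsIndep.mono_s11 {A B : Finset V} (hA : IsIndep G A) (hBA : B ⊆ A) : IsIndep G B :=
  fun u hu v hv => hA u (hBA hu) v (hBA hv)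

variable [DecidableEq V]

lemma IsIndep.insert {A : Finset V} {v : V} (hA : IsIndep G A) (hv : ∀ u ∈ A, ¬ G.Adj v u) :
    IsIndep G (insert v A) := by
  intro u hu w hw
  rw [mem_insert] at hu hw
  rcases hu with rfl | hu <;> rcases hw with rfl | hw
  · exact G.irrefl
  · exact hv w hw
  · exact fun h => hv u hu h.symm
  · exact hA u hu w hw

lemma TarStep.symm {I J : Finset V} (h : TarStep G k I J) : TarStep G k J I :=
  let ⟨hI, hJ, hkI, hkJ, v, hv⟩ := h
  ⟨hJ, hI, hkJ, hkI, v, hv.symm⟩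

lemma TarReach.symm {I J : Finset V} (h : TarReach G k I J) : TarReach G k J I := by
  induction h with
  | refl => exact .refl
  | tail _ hstep ih => exact .head hstep.symm ih

lemma tarStep_erase {A : Finset V} {a : V} (hA : IsIndep G A) (ha : a ∈ A)
    (hk : k ≤ #(A.erase a)) : TarStep G k A (A.erase a) :=
  ⟨hA, hA.mono_s11 (erase_subset _ _), hk.trans (card_le_card (erase_subset _ _)), hk, a,
    Or.inr (insert_erase ha).symm⟩

lemma tarStep_insert {A : Finset V} {v : V} (hA : IsIndep G (insert v A)) (hk : k ≤ #A) :
    TarStep G k A (insert v A) :=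
  ⟨hA.mono_s11 (subset_insert _ _), hA, hk, hk.trans (card_le_card (subset_insert _ _)), v,
    Or.inl rfl⟩

lemma tarReach_of_subset {A B : Finset V} (hA : IsIndep G A) (hBA : B ⊆ A) (hk : k ≤ #B) :
    TarReach G k A B := by
  induction A using Finset.strongInduction with
  | H A ih =>
  obtain rfl | hBA := hBA.eq_or_ssubset
  · exact .refl
  obtain ⟨a, haA, haB⟩ := exists_of_ssubset hBA
  have hBa : B ⊆ A.erase a := fun x hx => mem_erase.2 ⟨fun h => haB (h ▸ hx), hBA.le hx⟩
  exact .head (tarStep_erase hA haA (hk.trans (card_le_card hBa)))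
    (ih _ (erase_ssubset haA) (hA.mono_s11 (erase_subset _ _)) hBa)

lemma exists_tarReach_card_eq_succ {A : Finset V} (hA : IsIndep G A) (hk : k ≤ #A)
    (hfree : ¬ (IsDominating G A ∧ #A = k)) :
    ∃ A', TarReach G k A A' ∧ IsIndep G A' ∧ #A' = k + 1 := by
  rcases hk.eq_or_lt with hk | hk
  · obtain ⟨v, hvA, hv⟩ : ∃ v ∉ A, ∀ u ∈ A, ¬ G.Adj u v := by
      simpa [IsDominating, hk] using hfree
    have hA' : IsIndep G (insert v A) := hA.insert fun u hu h => hv u hu h.symm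
    exact ⟨_, .single (tarStep_insert hA' hk.le), hA', by rw [card_insert_of_notMem hvA, hk]⟩
  · obtain ⟨A', hA'A, hcard⟩ := exists_subset_card_eq (show k + 1 ≤ #A by omega)
    exact ⟨A', tarReach_of_subset hA hA'A (by omega), hA.mono_s11 hA'A, hcard⟩

lemma tarReach_of_card_eq_succ (hG : EvenHoleFree G) {A B : Finset V} (hA : IsIndep G A)
    (hB : IsIndep G B) (hcA : #A = k + 1) (hcB : #B = k + 1) : TarReach G k A B := by
  induction hd : #(A \ B) generalizing A with
  | zero =>
    obtain rfl : A = B :=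
      eq_of_subset_of_card_le (sdiff_eq_empty_iff_subset.1 (card_eq_zero.1 hd)) (by omega)
    exact .refl
  | succ d ih =>
    obtain ⟨y, hy, a, ha, hya⟩ := exists_forall_adj_eq_of_card_le hG (hA.mono_s11 sdiff_subset)
      (hB.mono_s11 sdiff_subset) (card_pos.1 (by omega))
      (card_sdiff_comm (hcA.trans hcB.symm)).le
    have hyA : y ∉ A.erase a := fun h => (mem_sdiff.1 hy).2 (mem_of_mem_erase h)
    have hA' : IsIndep G (insert y (A.erase a)) := by
      refine (hA.mono_s11 (erase_subset _ _)).insert fun u hu hadj => ?_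
      by_cases huB : u ∈ B
      · exact hB y (mem_sdiff.1 hy).1 u huB hadj
      · exact ne_of_mem_erase hu (hya u (mem_sdiff.2 ⟨mem_of_mem_erase hu, huB⟩) hadj)
    have hcard : #(A.erase a) = k := by rw [card_erase_of_mem (mem_sdiff.1 ha).1]; omega
    have hdiff : insert y (A.erase a) \ B = (A \ B).erase a := by
      ext u
      simp only [mem_sdiff, mem_insert, mem_erase]
      constructor
      · rintro ⟨rfl | hu, huB⟩
        exacts [absurd (mem_sdiff.1 hy).1 huB, ⟨hu.1, hu.2, huB⟩]
      · rintro ⟨hua, huA, huB⟩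
        exact ⟨Or.inr ⟨hua, huA⟩, huB⟩
    refine .head (tarStep_erase hA (mem_sdiff.1 ha).1 hcard.ge)
      (.head (tarStep_insert hA' hcard.ge) (ih hA' ?_ ?_))
    · rw [card_insert_of_notMem hyA, hcard]
    · rw [hdiff, card_erase_of_mem ha, hd, Nat.add_sub_cancel]

lemma TarStep.eq_of_isDominating {A J : Finset V} (hdom : IsDominating G A) (hcard : #A = k)
    (h : TarStep G k A J) : J = A := by
  obtain ⟨-, hJ, -, hkJ, v, rfl | rfl⟩ := h
  · rcases hdom v with hv | ⟨u, hu, hadj⟩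
    · exact insert_eq_of_mem hv
    · exact absurd hadj (hJ u (mem_insert_of_mem hu) v (mem_insert_self v A))
  · by_cases hvJ : v ∈ J
    · exact (insert_eq_of_mem hvJ).symm
    · rw [card_insert_of_notMem hvJ] at hcard
      omega

lemma TarReach.eq_of_isDominating {A J : Finset V} (hdom : IsDominating G A) (hcard : #A = k)
    (h : TarReach G k A J) : J = A := by
  induction h with
  | refl => rfl
  | tail _ hstep ih =>
    subst ih
    exact hstep.eq_of_isDominating hdom hcard

end Reconfiguration

/-- In an even-hole-free graph, two distinct independent sets of size at least
`k` are TAR_k-reachable from each other iff neither is a dominating set of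
size exactly `k`. -/
theorem even_hole_free_tar [DecidableEq V] (G : SimpleGraph V)
    (hG : EvenHoleFree G) (A B : Finset V) (hne : A ≠ B)
    (hA : IsIndep G A) (hB : IsIndep G B) (k : ℕ)
    (hkA : k ≤ A.card) (hkB : k ≤ B.card) :
    TarReach G k A B ↔
      ¬ (IsDominating G A ∧ A.card = k) ∧ ¬ (IsDominating G B ∧ B.card = k) := by
  constructor
  · intro h
    exact ⟨fun ⟨hdom, hcard⟩ => hne (h.eq_of_isDominating hdom hcard).symm,
      fun ⟨hdom, hcard⟩ => hne (h.symm.eq_of_isDominating hdom hcard)⟩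
  · rintro ⟨hfreeA, hfreeB⟩
    obtain ⟨A', hAA', hA', hcA'⟩ := exists_tarReach_card_eq_succ hA hkA hfreeA
    obtain ⟨B', hBB', hB', hcB'⟩ := exists_tarReach_card_eq_succ hB hkB hfreeB
    exact (hAA'.trans (tarReach_of_card_eq_succ hG hA' hB' hcA' hcB')).trans hBB'.symm
end

section
/- Let 𝒢 be a hereditary graph class, and let G be a graph that admits a cotree decomposition into 𝒢-graphs. Then every maximal cotree decomposition of G (one where all leaf graphs are indecomposable) is a cotree decomposition into 𝒢-graphs. -/
universe u

open Finset

variable {V : Type u}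

/-- The shape of a generalized cotree: leaves carry vertex sets, internal nodes
are union or join nodes. -/
inductive Cotree (V : Type u) : Type u where
  | leaf (S : Finset V) : Cotree V
  | union (l r : Cotree V) : Cotree V
  | join (l r : Cotree V) : Cotree V

/-- The vertex set associated with a node. -/
def Cotree.verts [DecidableEq V] : Cotree V → Finset V
  | .leaf S => S
  | .union l r => l.verts ∪ r.verts
  | .join l r => l.verts ∪ r.verts

/-- `t` is a generalized cotree decomposition with respect to `G`: leaves are
nonempty, children of every internal node have disjoint vertex sets, a union
node has no edges between its children, and a join node has all edges between
its children. -/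
def Cotree.WF [DecidableEq V] (G : SimpleGraph V) : Cotree V → Prop
  | .leaf S => S.Nonempty
  | .union l r => Disjoint l.verts r.verts ∧
      (∀ a ∈ l.verts, ∀ b ∈ r.verts, ¬ G.Adj a b) ∧ l.WF G ∧ r.WF G
  | .join l r => Disjoint l.verts r.verts ∧
      (∀ a ∈ l.verts, ∀ b ∈ r.verts, G.Adj a b) ∧ l.WF G ∧ r.WF G

/-- All leaf vertex sets satisfy `P`. -/
def Cotree.LeavesSat (P : Finset V → Prop) : Cotree V → Prop
  | .leaf S => P S
  | .union l r => l.LeavesSat P ∧ r.LeavesSat P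
  | .join l r => l.LeavesSat P ∧ r.LeavesSat P

/-- The vertex sets of all nodes of the cotree. -/
def Cotree.nodeSets [DecidableEq V] : Cotree V → Set (Finset V)
  | .leaf S => {S}
  | .union l r => insert (l.verts ∪ r.verts) (l.nodeSets ∪ r.nodeSets)
  | .join l r => insert (l.verts ∪ r.verts) (l.nodeSets ∪ r.nodeSets)

/-- The vertex sets of the leaves of the cotree. -/
def Cotree.leafSets : Cotree V → Set (Finset V)
  | .leaf S => {S}
  | .union l r => l.leafSets ∪ r.leafSets
  | .join l r => l.leafSets ∪ r.leafSets

/-- `G[S]` is indecomposable: both it and its complement are connected. -/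
def Indecomposable (G : SimpleGraph V) (S : Finset V) : Prop :=
  (G.induce (S : Set V)).Connected ∧ ((G.induce (S : Set V))ᶜ).Connected

/-!
An indecomposable set `S` cannot be split by a union node, since `G[S]` is connected, nor by a
join node, since its complement is connected. Descending any cotree decomposition of `G`, `S`
therefore ends up inside a single leaf, and heredity passes the leaf's property down to `S`.
-/

namespace SimpleGraph

theorem compl_induce (G : SimpleGraph V) (s : Set V) : (G.induce s)ᶜ = Gᶜ.induce s := by
  ext x y
  simp [Subtype.ext_iff]

theorem Preconnected.subset_or_subset_of_forall_not_adj {G : SimpleGraph V} {s A B : Set V}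
    (hconn : (G.induce s).Preconnected) (hs : s ⊆ A ∪ B)
    (hAB : ∀ a ∈ A, ∀ b ∈ B, ¬ G.Adj a b) : s ⊆ A ∨ s ⊆ B := by
  by_contra! h
  obtain ⟨⟨x, hxs, hxA⟩, ⟨y, hys, hyB⟩⟩ := And.imp Set.not_subset.mp Set.not_subset.mp h
  obtain ⟨p⟩ := hconn ⟨y, hys⟩ ⟨x, hxs⟩
  obtain ⟨d, -, hd₁, hd₂⟩ :=
    p.exists_boundary_dart {z | (z : V) ∈ A} ((hs hys).resolve_right hyB) hxA
  exact hAB _ hd₁ _ ((hs d.snd.2).resolve_left hd₂) d.adj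

end SimpleGraph

namespace Indecomposable

variable [DecidableEq V] {G : SimpleGraph V} {S A B : Finset V}

theorem subset_or_subset_of_forall_not_adj (hind : Indecomposable G S) (hS : S ⊆ A ∪ B)
    (hAB : ∀ a ∈ A, ∀ b ∈ B, ¬ G.Adj a b) : S ⊆ A ∨ S ⊆ B := by
  have hS' : (S : Set V) ⊆ A ∪ B := by exact_mod_cast hS
  exact_mod_cast hind.1.preconnected.subset_or_subset_of_forall_not_adj hS' hAB

theorem subset_or_subset_of_forall_adj (hind : Indecomposable G S) (hS : S ⊆ A ∪ B)
    (hAB : ∀ a ∈ A, ∀ b ∈ B, G.Adj a b) : S ⊆ A ∨ S ⊆ B := by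
  have hind' : Indecomposable Gᶜ S := by
    rw [Indecomposable, ← SimpleGraph.compl_induce, compl_compl]
    exact hind.symm
  exact hind'.subset_or_subset_of_forall_not_adj hS
    fun a ha b hb hadj => hadj.2 (hAB a ha b hb)

end Indecomposable

namespace Cotree

theorem LeavesSat.mono {P Q : Finset V → Prop} (hPQ : ∀ S, P S → Q S) :
    ∀ {t : Cotree V}, t.LeavesSat P → t.LeavesSat Q
  | .leaf S, h => hPQ S h
  | .union _ _, ⟨hl, hr⟩ => ⟨hl.mono hPQ, hr.mono hPQ⟩
  | .join _ _, ⟨hl, hr⟩ => ⟨hl.mono hPQ, hr.mono hPQ⟩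

theorem LeavesSat.of_mem_leafSets {P : Finset V → Prop} {T : Finset V} :
    ∀ {t : Cotree V}, t.LeavesSat P → T ∈ t.leafSets → P T
  | .leaf _, h, rfl => h
  | .union _ _, ⟨hl, hr⟩, hT | .join _ _, ⟨hl, hr⟩, hT =>
    hT.elim hl.of_mem_leafSets hr.of_mem_leafSets

theorem WF.exists_mem_leafSets_superset [DecidableEq V] {G : SimpleGraph V} {t : Cotree V}
    (ht : t.WF G) {S : Finset V} (hS : S ⊆ t.verts) (hind : Indecomposable G S) :
    ∃ T ∈ t.leafSets, S ⊆ T := by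
  induction t with
  | leaf T => exact ⟨T, rfl, hS⟩
  | union l r ihl ihr =>
    obtain ⟨-, hnadj, hl, hr⟩ := ht
    rcases hind.subset_or_subset_of_forall_not_adj hS hnadj with h | h
    · obtain ⟨T, hT, hST⟩ := ihl hl h
      exact ⟨T, .inl hT, hST⟩
    · obtain ⟨T, hT, hST⟩ := ihr hr h
      exact ⟨T, .inr hT, hST⟩
  | join l r ihl ihr =>
    obtain ⟨-, hadj, hl, hr⟩ := ht
    rcases hind.subset_or_subset_of_forall_adj hS hadj with h | h
    · obtain ⟨T, hT, hST⟩ := ihl hl h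
      exact ⟨T, .inl hT, hST⟩
    · obtain ⟨T, hT, hST⟩ := ihr hr h
      exact ⟨T, .inr hT, hST⟩

end Cotree

theorem maximal_cotree_hereditary_general [Fintype V] [DecidableEq V] (G : SimpleGraph V)
    (P : Finset V → Prop) (hP : ∀ S T : Finset V, T ⊆ S → P S → P T)
    (h : ∃ t : Cotree V, t.WF G ∧ t.verts = Finset.univ ∧ t.LeavesSat P)
    (t' : Cotree V)
    (hmax : t'.LeavesSat (Indecomposable G)) :
    t'.LeavesSat P := by
  obtain ⟨t, ht, hverts, hsat⟩ := h
  refine hmax.mono fun S hind => ?_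
  obtain ⟨T, hT, hST⟩ := ht.exists_mem_leafSets_superset (hverts ▸ S.subset_univ) hind
  exact hP T S hST (hsat.of_mem_leafSets hT)

/-- If `G` admits a cotree decomposition into graphs of a hereditary class
(described by the predicate `P` on induced-subgraph vertex sets), then every
maximal cotree decomposition of `G` is a decomposition into such graphs. -/
theorem maximal_cotree_hereditary [Fintype V] [DecidableEq V] (G : SimpleGraph V)
    (P : Finset V → Prop) (hP : ∀ S T : Finset V, T ⊆ S → P S → P T)
    (h : ∃ t : Cotree V, t.WF G ∧ t.verts = Finset.univ ∧ t.LeavesSat P)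
    (t' : Cotree V) (ht' : t'.WF G) (hverts : t'.verts = Finset.univ)
    (hmax : t'.LeavesSat (Indecomposable G)) :
    t'.LeavesSat P :=
  maximal_cotree_hereditary_general G P hP h t' hmax
end
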